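/- arXiv:1609.02657 — 4 statements merged into one kernel-verified Lean document; each statement's English description precedes it below -/
import Mathlib

section
/- For the path P_n on n vertices (n ≥ 1), the maximum cardinality of a convexly independent set equals 2·⌊n/3⌋ + (n mod 3). -/
/-- A set `S` of vertices is P3-convex if every vertex outside `S`
has at most one neighbor in `S`. -/
def P3Convex {V : Type*} (G : SimpleGraph V) (S : Set V) : Prop :=
  ∀ x ∉ S, ({y | y ∈ S ∧ G.Adj x y} : Set V).Subsingleton

/-- The P3-convex hull of `A`: the intersection of all P3-convex sets containing `A`. -/
def p3Hull {V : Type*} (G : SimpleGraph V) (A : Set V) : Set V :=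
  ⋂₀ {C : Set V | P3Convex G C ∧ A ⊆ C}

/-- A set `S` is convexly independent if no `x ∈ S` lies in the hull of `S \ {x}`. -/
def ConvIndep {V : Type*} (G : SimpleGraph V) (S : Set V) : Prop :=
  ∀ x ∈ S, x ∉ p3Hull G (S \ {x})

/-- The maximum cardinality of a convexly independent set. -/
noncomputable def betaC {V : Type*} (G : SimpleGraph V) : ℕ :=
  sSup {n | ∃ S : Set V, ConvIndep G S ∧ S.ncard = n}

/-! In a graph of maximum degree at most two, adding every vertex with two neighbours in `A`
already gives a P3-convex set, so the hull is reached in one step. Hence a set of vertices of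
the path is convexly independent iff it contains no three consecutive vertices. Such a set meets
every block of three consecutive vertices in at most two of them, which gives the upper bound,
and the vertices whose index is not `2` mod `3` attain it. -/

open SimpleGraph Set

section Hull

variable {V : Type*} {G : SimpleGraph V} {A C : Set V}

lemma p3Hull_subset_of_p3Convex (hC : P3Convex G C) (hAC : A ⊆ C) : p3Hull G A ⊆ C :=
  sInter_subset_of_mem ⟨hC, hAC⟩

lemma subset_p3Hull : A ⊆ p3Hull G A :=
  subset_sInter fun _ hC ↦ hC.2

lemma mem_p3Hull_of_adj_of_adj {x a b : V} (ha : a ∈ A) (hb : b ∈ A) (hab : a ≠ b)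
    (hxa : G.Adj x a) (hxb : G.Adj x b) : x ∈ p3Hull G A := by
  refine mem_sInter.2 fun C ⟨hC, hAC⟩ ↦ ?_
  by_contra hx
  exact hab (hC x hx ⟨hAC ha, hxa⟩ ⟨hAC hb, hxb⟩)

def p3Step (G : SimpleGraph V) (A : Set V) : Set V :=
  A ∪ {x | ∃ a ∈ A, ∃ b ∈ A, a ≠ b ∧ G.Adj x a ∧ G.Adj x b}

def MaxDegreeLeTwo (G : SimpleGraph V) : Prop :=
  ∀ ⦃v a b c⦄, G.Adj v a → G.Adj v b → G.Adj v c → a ≠ b → c = a ∨ c = b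

lemma p3Convex_p3Step (hG : MaxDegreeLeTwo G) (A : Set V) : P3Convex G (p3Step G A) := by
  -- a vertex added by the step already has its at most two neighbours in `A`
  have mem_of_adj : ∀ {x y}, x ∉ p3Step G A → y ∈ p3Step G A → G.Adj x y → y ∈ A := by
    rintro x y hx (hy | ⟨a, ha, b, hb, hab, hya, hyb⟩) hxy
    · exact hy
    · rcases hG hya hyb hxy.symm hab with rfl | rfl <;> exact absurd (Or.inl ‹_›) hx
  intro x hx y ⟨hy, hxy⟩ z ⟨hz, hxz⟩
  by_contra hyz
  exact hx (Or.inr ⟨y, mem_of_adj hx hy hxy, z, mem_of_adj hx hz hxz, hyz, hxy, hxz⟩)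

lemma p3Hull_eq_p3Step (hG : MaxDegreeLeTwo G) (A : Set V) : p3Hull G A = p3Step G A := by
  refine (p3Hull_subset_of_p3Convex (p3Convex_p3Step hG A) subset_union_left).antisymm ?_
  rintro x (hx | ⟨a, ha, b, hb, hab, hxa, hxb⟩)
  · exact subset_p3Hull hx
  · exact mem_p3Hull_of_adj_of_adj ha hb hab hxa hxb

lemma convIndep_iff_of_maxDegreeLeTwo (hG : MaxDegreeLeTwo G) {S : Set V} :
    ConvIndep G S ↔ ∀ x ∈ S, ∀ a ∈ S, ∀ b ∈ S, G.Adj x a → G.Adj x b → a = b := by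
  simp only [ConvIndep, p3Hull_eq_p3Step hG]
  constructor
  · intro h x hx a ha b hb hxa hxb
    by_contra hab
    exact h x hx (Or.inr ⟨a, ⟨ha, hxa.ne'⟩, b, ⟨hb, hxb.ne'⟩, hab, hxa, hxb⟩)
  · rintro h x hx (hx' | ⟨a, ⟨ha, -⟩, b, ⟨hb, -⟩, hab, hxa, hxb⟩)
    · exact hx'.2 rfl
    · exact hab (h x hx a ha b hb hxa hxb)

end Hull

def NoThreeConsecutive (T : Set ℕ) : Prop :=
  ∀ i, i ∈ T → i + 1 ∈ T → i + 2 ∉ T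

namespace NoThreeConsecutive

variable {T : Set ℕ}

lemma mono {T' : Set ℕ} (hT : NoThreeConsecutive T) (h : T' ⊆ T) : NoThreeConsecutive T' :=
  fun i hi hi₁ hi₂ ↦ hT i (h hi) (h hi₁) (h hi₂)

lemma ncard_inter_Ico_le (hT : NoThreeConsecutive T) (m : ℕ) :
    (T ∩ Ico m (m + 3)).ncard ≤ 2 := by
  obtain ⟨j, hj, hjT⟩ : ∃ j ∈ Ico m (m + 3), j ∉ T := by
    by_contra! h
    exact hT m (h m (by simp)) (h (m + 1) (by simp)) (h (m + 2) (by simp))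
  calc (T ∩ Ico m (m + 3)).ncard ≤ (Ico m (m + 3) \ {j}).ncard :=
        ncard_le_ncard (fun i ⟨hiT, hi⟩ ↦ ⟨hi, fun e ↦ hjT (e ▸ hiT)⟩) (toFinite _)
    _ = 2 := by rw [ncard_sdiff_singleton_of_mem hj, ncard_Ico_nat]; omega

lemma ncard_inter_Iio_le (hT : NoThreeConsecutive T) (n : ℕ) :
    (T ∩ Iio n).ncard ≤ 2 * (n / 3) + n % 3 := by
  induction n using Nat.strong_induction_on with
  | _ n ih =>
  rcases lt_or_ge n 3 with hn | hn
  · calc (T ∩ Iio n).ncard ≤ (Iio n).ncard := ncard_le_ncard inter_subset_right (finite_Iio n)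
      _ = n := ncard_Iio_nat n
      _ = 2 * (n / 3) + n % 3 := by omega
  · obtain ⟨m, rfl⟩ : ∃ m, n = m + 3 := ⟨n - 3, by omega⟩
    calc (T ∩ Iio (m + 3)).ncard = (T ∩ Iio m ∪ T ∩ Ico m (m + 3)).ncard := by
          rw [← inter_union_distrib_left, Iio_union_Ico_eq_Iio (by omega)]
      _ ≤ (T ∩ Iio m).ncard + (T ∩ Ico m (m + 3)).ncard := ncard_union_le _ _
      _ ≤ 2 * (m / 3) + m % 3 + 2 := add_le_add (ih m (by omega)) (hT.ncard_inter_Ico_le m)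
      _ = 2 * ((m + 3) / 3) + (m + 3) % 3 := by omega

end NoThreeConsecutive

lemma noThreeConsecutive_mod_three_ne_two : NoThreeConsecutive {i | i % 3 ≠ 2} := by
  intro i (hi : i % 3 ≠ 2) (hi₁ : (i + 1) % 3 ≠ 2) (hi₂ : (i + 2) % 3 ≠ 2)
  omega

lemma count_mod_three_ne_two (n : ℕ) : Nat.count (· % 3 ≠ 2) n = 2 * (n / 3) + n % 3 := by
  induction n with
  | zero => rfl
  | succ n ih => rw [Nat.count_succ, ih]; split_ifs <;> omega

lemma ncard_setOf_lt_and (p : ℕ → Prop) [DecidablePred p] (n : ℕ) :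
    {i | i < n ∧ p i}.ncard = Nat.count p n := by
  rw [Nat.count_eq_card_filter_range, ← ncard_coe_finset, Finset.coe_filter]
  simp only [Finset.mem_range]

lemma maxDegreeLeTwo_pathGraph (n : ℕ) : MaxDegreeLeTwo (pathGraph n) := by
  intro v a b c hva hvb hvc hab
  rw [pathGraph_adj] at hva hvb hvc
  have hab' : a.val ≠ b.val := Fin.val_ne_of_ne hab
  rw [Fin.ext_iff, Fin.ext_iff]
  omega

section PathGraph

variable {n : ℕ}

lemma convIndep_pathGraph_iff {S : Set (Fin n)} :
    ConvIndep (pathGraph n) S ↔ NoThreeConsecutive (Fin.val '' S) := by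
  rw [convIndep_iff_of_maxDegreeLeTwo (maxDegreeLeTwo_pathGraph n)]
  constructor
  · rintro h _ ⟨a, ha, rfl⟩ ⟨x, hx, hxa⟩ ⟨b, hb, hba⟩
    have := h x hx a ha b hb (pathGraph_adj.2 (by omega)) (pathGraph_adj.2 (by omega))
    omega
  · intro h x hx a ha b hb hxa hxb
    rw [pathGraph_adj] at hxa hxb
    by_contra hab
    rcases (Fin.val_ne_of_ne hab).lt_or_gt with hlt | hlt
    · exact h a ⟨a, ha, rfl⟩ ⟨x, hx, by omega⟩ ⟨b, hb, by omega⟩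
    · exact h b ⟨b, hb, rfl⟩ ⟨x, hx, by omega⟩ ⟨a, ha, by omega⟩

lemma ncard_le_of_convIndep_pathGraph {S : Set (Fin n)} (hS : ConvIndep (pathGraph n) S) :
    S.ncard ≤ 2 * (n / 3) + n % 3 := by
  have hval : Fin.val '' S ∩ Iio n = Fin.val '' S := by
    rw [inter_eq_left]
    rintro _ ⟨x, -, rfl⟩
    exact x.isLt
  calc S.ncard = (Fin.val '' S ∩ Iio n).ncard := by
        rw [hval, ncard_image_of_injective S Fin.val_injective]
    _ ≤ 2 * (n / 3) + n % 3 := (convIndep_pathGraph_iff.1 hS).ncard_inter_Iio_le n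

lemma convIndep_pathGraph_mod_three_ne_two :
    ConvIndep (pathGraph n) {x : Fin n | x.val % 3 ≠ 2} :=
  convIndep_pathGraph_iff.2 <|
    noThreeConsecutive_mod_three_ne_two.mono <| image_subset_iff.2 fun _ h ↦ h

lemma ncard_mod_three_ne_two : {x : Fin n | x.val % 3 ≠ 2}.ncard = 2 * (n / 3) + n % 3 := by
  have : Fin.val '' {x : Fin n | x.val % 3 ≠ 2} = {i | i < n ∧ i % 3 ≠ 2} := by
    ext i
    exact ⟨by rintro ⟨x, hx, rfl⟩; exact ⟨x.isLt, hx⟩, fun ⟨hi, hi'⟩ ↦ ⟨⟨i, hi⟩, hi', rfl⟩⟩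
  rw [← ncard_image_of_injective _ Fin.val_injective, this, ncard_setOf_lt_and,
    count_mod_three_ne_two]

end PathGraph

theorem betaC_pathGraph_general (n : ℕ) :
    betaC (SimpleGraph.pathGraph n) = 2 * (n / 3) + n % 3 :=
  IsGreatest.csSup_eq ⟨⟨_, convIndep_pathGraph_mod_three_ne_two, ncard_mod_three_ne_two⟩,
    by rintro _ ⟨S, hS, rfl⟩; exact ncard_le_of_convIndep_pathGraph hS⟩

theorem betaC_pathGraph (n : ℕ) (hn : 1 ≤ n) :
    betaC (SimpleGraph.pathGraph n) = 2 * (n / 3) + n % 3 :=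
  betaC_pathGraph_general n
end

section
/- Let G be the join of graphs G1 and G2 (every vertex of G1 adjacent to every vertex of G2). If S is a convexly independent set of G containing at least one vertex from G1 and at least one vertex from G2, then |S| = 2. -/
/-- The join of two graphs: disjoint union plus all edges between the two sides. -/
def joinGraph {α β : Type*} (G : SimpleGraph α) (H : SimpleGraph β) :
    SimpleGraph (α ⊕ β) where
  Adj u v := match u, v with
    | Sum.inl a, Sum.inl b => G.Adj a b
    | Sum.inr a, Sum.inr b => H.Adj a b
    | Sum.inl _, Sum.inr _ => True
    | Sum.inr _, Sum.inl _ => True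
  symm := ⟨by rintro (a | a) (b | b) h <;> first | exact h.symm | trivial⟩
  loopless := ⟨by rintro (a | a) h <;> first | exact G.irrefl h | exact H.irrefl h⟩

/-! A vertex `u` of `S` with two distinct neighbours in `S` lies in the hull of `S \ {u}`, and in
the join every vertex of one side is adjacent to every vertex of the other. So a vertex `inr b`
of `S` forces `S` to contain only one vertex of the first side, and symmetrically. -/

section P3Hull

variable {V : Type*} {G : SimpleGraph V}

theorem mem_p3Hull_of_adj_of_adj_s10 {A : Set V} {x v w : V} (hv : v ∈ A) (hw : w ∈ A)
    (hvw : v ≠ w) (hxv : G.Adj x v) (hxw : G.Adj x w) : x ∈ p3Hull G A := by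
  rintro C ⟨hC, hAC⟩
  by_contra hx
  exact hvw (hC x hx ⟨hAC hv, hxv⟩ ⟨hAC hw, hxw⟩)

theorem ConvIndep.eq_of_adj_of_adj {S : Set V} (hS : ConvIndep G S) {u v w : V}
    (hu : u ∈ S) (hv : v ∈ S) (hw : w ∈ S) (huv : G.Adj u v) (huw : G.Adj u w) : v = w := by
  by_contra hvw
  exact hS u hu <| mem_p3Hull_of_adj_of_adj_s10 ⟨hv, huv.ne.symm⟩ ⟨hw, huw.ne.symm⟩ hvw huv huw

end P3Hull

theorem convIndep_join_both_sides {α β : Type*} (G₁ : SimpleGraph α) (G₂ : SimpleGraph β)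
    (S : Set (α ⊕ β)) (hS : ConvIndep (joinGraph G₁ G₂) S)
    (h₁ : ∃ a : α, Sum.inl a ∈ S) (h₂ : ∃ b : β, Sum.inr b ∈ S) :
    S.ncard = 2 := by
  obtain ⟨a, ha⟩ := h₁
  obtain ⟨b, hb⟩ := h₂
  have hS_eq : S = {Sum.inl a, Sum.inr b} := by
    refine Set.Subset.antisymm ?_ (Set.insert_subset ha (Set.singleton_subset_iff.mpr hb))
    rintro (a' | b') hx
    · exact Or.inl (hS.eq_of_adj_of_adj hb hx ha trivial trivial)
    · exact Or.inr (hS.eq_of_adj_of_adj ha hx hb trivial trivial)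
  rw [hS_eq, Set.ncard_pair Sum.inl_ne_inr]
end

section
/- Let S be a set of vertices of a graph G with |S| ≥ 2 and suppose S induces a clique after adding all edges within S. Then for every vertex x ∈ σ(S) \ S there exist two paths from x to S, inside σ(S), that are vertex-disjoint except for x; in particular no single vertex c ∈ σ(S) \ {x} separates x from S within the induced subgraph on σ(S). -/
/-!
Build the hull in stages: `p3Stage G S 0 = S`, and stage `n + 1` adds every vertex with two
distinct neighbours in stage `n`. By induction on the stage, every vertex `v` of a stage `W`
has two paths inside `W` to `S` that meet only at `v`. For a new vertex `x` with neighbours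
`y ≠ z` in `W`, keep the paths `A₁, A₂` from `y`, and take a walk `B` from `z` to `S` avoiding `y`
(one of the two paths from `z` does). If `B` misses `A₁ ∪ A₂`, then `x y A₁` and `x z B` work.
Otherwise `B` first hits, say, `A₁` at some `u ≠ y`, and `x z B[..u] A₁[u..]` together with
`x y A₂` work. A vertex `c ≠ x` lies on at most one of the two paths, so it does not separate
`x` from `S`.
-/

section P3HullPaths

open SimpleGraph

variable {V : Type*} {G : SimpleGraph V}

namespace SimpleGraph.Walk

lemma exists_prefix_to_first_mem {u v : V} (p : G.Walk u v) (A : Set V)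
    (h : ∃ a ∈ p.support, a ∈ A) :
    ∃ a ∈ A, ∃ q : G.Walk u a, q.support ⊆ p.support ∧ ∀ b ∈ q.support, b ∈ A → b = a := by
  induction p with
  | nil =>
    obtain ⟨a, ha, haA⟩ := h
    rw [support_nil, List.mem_singleton] at ha
    subst ha
    exact ⟨a, haA, nil, by simp, by simp⟩
  | @cons u w v hadj p ih =>
    by_cases hu : u ∈ A
    · exact ⟨u, hu, nil, by simp, by simp⟩
    have htail : ∃ a ∈ p.support, a ∈ A := by
      obtain ⟨a, ha, haA⟩ := h
      rw [support_cons, List.mem_cons] at ha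
      rcases ha with rfl | ha
      · exact absurd haA hu
      · exact ⟨a, ha, haA⟩
    obtain ⟨a, haA, q, hqp, hq⟩ := ih htail
    refine ⟨a, haA, cons hadj q, List.cons_subset_cons _ hqp, ?_⟩
    rintro b hb hbA
    rw [support_cons, List.mem_cons] at hb
    rcases hb with rfl | hb
    · exact absurd hbA hu
    · exact hq b hb hbA

lemma IsPath.eq_of_start_mem_support_dropUntil [DecidableEq V] {u v w : V} {p : G.Walk u v}
    (hp : p.IsPath) (hw : w ∈ p.support) (hu : u ∈ (p.dropUntil w hw).support) : w = u := by
  have hnodup := hp.support_nodup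
  rw [← p.take_spec hw, support_append] at hnodup
  rw [← (p.dropUntil w hw).cons_tail_support, List.mem_cons] at hu
  rcases hu with rfl | hu
  · rfl
  · exact absurd hu (List.disjoint_of_nodup_append hnodup (p.takeUntil w hw).start_mem_support)

end SimpleGraph.Walk

def p3Stage (G : SimpleGraph V) (S : Set V) : ℕ → Set V
  | 0 => S
  | n + 1 => p3Stage G S n ∪
      {v | ∃ y z, y ≠ z ∧ G.Adj v y ∧ G.Adj v z ∧ y ∈ p3Stage G S n ∧ z ∈ p3Stage G S n}

section Hull

variable {S : Set V}

lemma p3Stage_mono : Monotone (p3Stage G S) :=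
  monotone_nat_of_le_succ fun _ => Set.subset_union_left

lemma p3Stage_subset_of_p3Convex {C : Set V} (hC : P3Convex G C) (hSC : S ⊆ C) (n : ℕ) :
    p3Stage G S n ⊆ C := by
  induction n with
  | zero => exact hSC
  | succ n ih =>
    rintro v (hv | ⟨y, z, hyz, hvy, hvz, hy, hz⟩)
    · exact ih hv
    · by_contra hvC
      exact hyz (hC v hvC ⟨ih hy, hvy⟩ ⟨ih hz, hvz⟩)

lemma p3Convex_iUnion_p3Stage : P3Convex G (⋃ n, p3Stage G S n) := by
  intro v hv y ⟨hy, hvy⟩ z ⟨hz, hvz⟩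
  obtain ⟨i, hi⟩ := Set.mem_iUnion.1 hy
  obtain ⟨j, hj⟩ := Set.mem_iUnion.1 hz
  by_contra hyz
  refine hv (Set.mem_iUnion.2 ⟨max i j + 1, Or.inr ⟨y, z, hyz, hvy, hvz, ?_, ?_⟩⟩)
  · exact p3Stage_mono (le_max_left i j) hi
  · exact p3Stage_mono (le_max_right i j) hj

lemma p3Hull_eq_iUnion_p3Stage : p3Hull G S = ⋃ n, p3Stage G S n :=
  subset_antisymm
    (Set.sInter_subset_of_mem ⟨p3Convex_iUnion_p3Stage, Set.subset_iUnion (p3Stage G S) 0⟩)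
    (Set.iUnion_subset fun n => Set.subset_sInter fun _ hC => p3Stage_subset_of_p3Convex hC.1 hC.2 n)

end Hull

def TwoDisjointPathsTo (G : SimpleGraph V) (W S : Set V) (v : V) : Prop :=
  ∃ s₁ ∈ S, ∃ s₂ ∈ S, ∃ p₁ : G.Walk v s₁, ∃ p₂ : G.Walk v s₂, p₁.IsPath ∧ p₂.IsPath ∧
    (∀ w ∈ p₁.support, w ∈ W) ∧ (∀ w ∈ p₂.support, w ∈ W) ∧
    ∀ w ∈ p₁.support, w ∈ p₂.support → w = v

namespace TwoDisjointPathsTo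

variable {W S : Set V}

lemma of_mem {v : V} (hv : v ∈ S) (hW : S ⊆ W) : TwoDisjointPathsTo G W S v :=
  ⟨v, hv, v, hv, .nil, .nil, .nil, .nil, by simpa using hW hv, by simpa using hW hv, by simp⟩

lemma mono {W' : Set V} {v : V} (h : TwoDisjointPathsTo G W S v) (hW : W ⊆ W') :
    TwoDisjointPathsTo G W' S v := by
  obtain ⟨s₁, hs₁, s₂, hs₂, p₁, p₂, hp₁, hp₂, hp₁W, hp₂W, hp⟩ := h
  exact ⟨s₁, hs₁, s₂, hs₂, p₁, p₂, hp₁, hp₂, fun w hw => hW (hp₁W w hw),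
    fun w hw => hW (hp₂W w hw), hp⟩

lemma exists_avoiding {v c : V} (h : TwoDisjointPathsTo G W S v) (hc : c ≠ v) :
    ∃ s ∈ S, ∃ p : G.Walk v s, (∀ w ∈ p.support, w ∈ W) ∧ c ∉ p.support := by
  obtain ⟨s₁, hs₁, s₂, hs₂, p₁, p₂, -, -, hp₁W, hp₂W, hp⟩ := h
  by_cases hc₁ : c ∈ p₁.support
  · exact ⟨s₂, hs₂, p₂, hp₂W, fun hc₂ => hc (hp c hc₁ hc₂)⟩
  · exact ⟨s₁, hs₁, p₁, hp₁W, hc₁⟩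

lemma of_adj_of_disjoint {x y z s₁ s₂ : V} (hx : x ∉ W) (hxy : G.Adj x y) (hxz : G.Adj x z)
    (hs₁ : s₁ ∈ S) (hs₂ : s₂ ∈ S) (P : G.Walk y s₁) (Q : G.Walk z s₂)
    (hPW : ∀ w ∈ P.support, w ∈ W) (hQW : ∀ w ∈ Q.support, w ∈ W)
    (hPQ : ∀ w ∈ P.support, w ∉ Q.support) : TwoDisjointPathsTo G (insert x W) S x := by
  classical
  have hP := P.support_bypass_subset_support
  have hQ := Q.support_bypass_subset_support
  refine ⟨s₁, hs₁, s₂, hs₂, .cons hxy P.bypass, .cons hxz Q.bypass,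
    P.bypass_isPath.cons fun h => hx (hPW x (hP h)),
    Q.bypass_isPath.cons fun h => hx (hQW x (hQ h)), ?_, ?_, ?_⟩
  · simpa using fun w hw => Or.inr (hPW w (hP hw))
  · simpa using fun w hw => Or.inr (hQW w (hQ hw))
  · simp only [Walk.support_cons, List.mem_cons]
    rintro w (hwx | hwP) (hwx' | hwQ)
    all_goals first | assumption | exact absurd (hQ hwQ) (hPQ w (hP hwP))

end TwoDisjointPathsTo

section Linkage

variable {W S : Set V}

lemma exists_disjoint_walks_of_first_hit {y z a₁ a₂ u : V}
    (A₁ : G.Walk y a₁) (A₂ : G.Walk y a₂) (hA₁ : A₁.IsPath)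
    (hA₁W : ∀ w ∈ A₁.support, w ∈ W) (hA : ∀ w ∈ A₁.support, w ∈ A₂.support → w = y)
    (q : G.Walk z u) (hqW : ∀ w ∈ q.support, w ∈ W)
    (hq : ∀ w ∈ q.support, w ∈ A₂.support → w = u) (hu : u ∈ A₁.support) (huy : u ≠ y) :
    ∃ Q : G.Walk z a₁, (∀ w ∈ Q.support, w ∈ W) ∧ ∀ w ∈ A₂.support, w ∉ Q.support := by
  classical
  refine ⟨q.append (A₁.dropUntil u hu), ?_, ?_⟩
  · intro w hw
    rw [Walk.mem_support_append_iff] at hw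
    exact hw.elim (hqW w) fun hw => hA₁W w (A₁.support_dropUntil_subset_support hu hw)
  · intro w hw₂ hw
    rw [Walk.mem_support_append_iff] at hw
    rcases hw with hwq | hwA₁
    · obtain rfl := hq w hwq hw₂
      exact huy (hA w hu hw₂)
    · obtain rfl := hA w (A₁.support_dropUntil_subset_support hu hwA₁) hw₂
      exact huy (hA₁.eq_of_start_mem_support_dropUntil hu hwA₁)

lemma exists_disjoint_walks {y z : V} (hyz : y ≠ z) (hy : TwoDisjointPathsTo G W S y)
    (hz : TwoDisjointPathsTo G W S z) :
    ∃ s₁ ∈ S, ∃ s₂ ∈ S, ∃ P : G.Walk y s₁, ∃ Q : G.Walk z s₂,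
      (∀ w ∈ P.support, w ∈ W) ∧ (∀ w ∈ Q.support, w ∈ W) ∧ ∀ w ∈ P.support, w ∉ Q.support := by
  obtain ⟨a₁, ha₁, a₂, ha₂, A₁, A₂, hA₁, hA₂, hA₁W, hA₂W, hA⟩ := hy
  obtain ⟨b, hb, B, hBW, hyB⟩ := hz.exists_avoiding hyz
  by_cases hit : ∃ w ∈ B.support, w ∈ {w | w ∈ A₁.support ∨ w ∈ A₂.support}
  swap
  · push Not at hit
    exact ⟨a₁, ha₁, b, hb, A₁, B, hA₁W, hBW, fun w hwA hwB => hit w hwB (Or.inl hwA)⟩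
  obtain ⟨u, hu, q, hqB, hq⟩ := B.exists_prefix_to_first_mem _ hit
  have hqW : ∀ w ∈ q.support, w ∈ W := fun w hw => hBW w (hqB hw)
  have huy : u ≠ y := by
    rintro rfl
    exact hyB (hqB q.end_mem_support)
  rcases hu with hu | hu
  · obtain ⟨Q, hQW, hQ⟩ := exists_disjoint_walks_of_first_hit A₁ A₂ hA₁ hA₁W hA
      q hqW (fun w hw hw₂ => hq w hw (Or.inr hw₂)) hu huy
    exact ⟨a₂, ha₂, a₁, ha₁, A₂, Q, hA₂W, hQW, hQ⟩
  · obtain ⟨Q, hQW, hQ⟩ := exists_disjoint_walks_of_first_hit A₂ A₁ hA₂ hA₂W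
      (fun w hw₂ hw₁ => hA w hw₁ hw₂) q hqW (fun w hw hw₁ => hq w hw (Or.inl hw₁)) hu huy
    exact ⟨a₁, ha₁, a₂, ha₂, A₁, Q, hA₁W, hQW, hQ⟩

lemma TwoDisjointPathsTo.insert {x y z : V} (hx : x ∉ W) (hyz : y ≠ z) (hxy : G.Adj x y)
    (hxz : G.Adj x z) (hy : TwoDisjointPathsTo G W S y) (hz : TwoDisjointPathsTo G W S z) :
    TwoDisjointPathsTo G (insert x W) S x := by
  obtain ⟨s₁, hs₁, s₂, hs₂, P, Q, hPW, hQW, hPQ⟩ := exists_disjoint_walks hyz hy hz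
  exact .of_adj_of_disjoint hx hxy hxz hs₁ hs₂ P Q hPW hQW hPQ

lemma twoDisjointPathsTo_of_mem_p3Stage (n : ℕ) {v : V} (hv : v ∈ p3Stage G S n) :
    TwoDisjointPathsTo G (p3Stage G S n) S v := by
  induction n generalizing v with
  | zero => exact .of_mem hv subset_rfl
  | succ n ih =>
    by_cases hvn : v ∈ p3Stage G S n
    · exact (ih hvn).mono (p3Stage_mono n.le_succ)
    obtain ⟨y, z, hyz, hvy, hvz, hy, hz⟩ := hv.resolve_left hvn
    exact ((ih hy).insert hvn hyz hvy hvz (ih hz)).mono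
      (Set.insert_subset hv Set.subset_union_left)

lemma twoDisjointPathsTo_of_mem_p3Hull {v : V} (hv : v ∈ p3Hull G S) :
    TwoDisjointPathsTo G (p3Hull G S) S v := by
  rw [p3Hull_eq_iUnion_p3Stage] at hv ⊢
  obtain ⟨n, hn⟩ := Set.mem_iUnion.1 hv
  exact (twoDisjointPathsTo_of_mem_p3Stage n hn).mono (Set.subset_iUnion _ n)

end Linkage

end P3HullPaths

theorem two_disjoint_paths_to_clique_general {V : Type*} (G : SimpleGraph V) (S : Set V)
    (x : V) (hx : x ∈ p3Hull G S \ S) :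
    (∃ s₁ ∈ S, ∃ s₂ ∈ S, ∃ p₁ : G.Walk x s₁, ∃ p₂ : G.Walk x s₂,
      (∀ v ∈ p₁.support, v ∈ p3Hull G S) ∧ (∀ v ∈ p₂.support, v ∈ p3Hull G S) ∧
      (∀ v ∈ p₁.support, v ∈ p₂.support → v = x)) ∧
    (∀ c ∈ p3Hull G S, c ≠ x →
      ∃ s ∈ S, ∃ p : G.Walk x s,
        (∀ v ∈ p.support, v ∈ p3Hull G S) ∧ c ∉ p.support) := by
  have hpaths := twoDisjointPathsTo_of_mem_p3Hull hx.1
  refine ⟨?_, fun c _ hc => hpaths.exists_avoiding hc⟩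
  obtain ⟨s₁, hs₁, s₂, hs₂, p₁, p₂, -, -, hp⟩ := hpaths
  exact ⟨s₁, hs₁, s₂, hs₂, p₁, p₂, hp⟩

theorem two_disjoint_paths_to_clique {V : Type*} (G : SimpleGraph V) (S : Set V)
    (hclique : G.IsClique S) (hcard : 2 ≤ S.ncard)
    (x : V) (hx : x ∈ p3Hull G S \ S) :
    (∃ s₁ ∈ S, ∃ s₂ ∈ S, ∃ p₁ : G.Walk x s₁, ∃ p₂ : G.Walk x s₂,
      (∀ v ∈ p₁.support, v ∈ p3Hull G S) ∧ (∀ v ∈ p₂.support, v ∈ p3Hull G S) ∧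
      (∀ v ∈ p₁.support, v ∈ p₂.support → v = x)) ∧
    (∀ c ∈ p3Hull G S, c ≠ x →
      ∃ s ∈ S, ∃ p : G.Walk x s,
        (∀ v ∈ p.support, v ∈ p3Hull G S) ∧ c ∉ p.support) :=
  two_disjoint_paths_to_clique_general G S x hx
end

section
/- If G is a connected cograph (P4-free graph) on at least two vertices that is the join of graphs with vertex sets A and B, and u is a vertex adjacent to all of V(G) (in the larger graph G + u), then any convexly independent set of G + u contained in A has at most 2 elements. -/
/-- The graph `G + u` obtained from `G` by adding a universal vertex (`none`). -/
def addUniversal {V : Type*} (G : SimpleGraph V) : SimpleGraph (Option V) where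
  Adj u v := match u, v with
    | some a, some b => G.Adj a b
    | some _, none => True
    | none, some _ => True
    | none, none => False
  symm := ⟨by rintro (_ | a) (_ | b) h <;> first | exact h.symm | trivial⟩
  loopless := ⟨by rintro (_ | a) h <;> first | exact h | exact G.loopless.irrefl a h⟩

/-!
A vertex with two distinct neighbours in a P3-convex set belongs to it. In `G + u` the universal
vertex `u` and any `b ∈ B` are two distinct common neighbours of all of `A`, so for three vertices
`x, y, z` of `A` the hull of `{y, z}` contains `u` and `b`, hence `x`.
-/

theorem P3Convex.mem_of_adj_of_adj {V : Type*} {G : SimpleGraph V} {C : Set V}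
    (hC : P3Convex G C) {x y z : V} (hy : y ∈ C) (hz : z ∈ C) (hyz : y ≠ z)
    (hxy : G.Adj x y) (hxz : G.Adj x z) : x ∈ C := by
  by_contra hx
  exact hyz (hC x hx ⟨hy, hxy⟩ ⟨hz, hxz⟩)

theorem subset_p3Hull_s18 {V : Type*} (G : SimpleGraph V) (T : Set V) : T ⊆ p3Hull G T :=
  fun _ hx => Set.mem_sInter.2 fun _ hC => hC.2 hx

theorem mem_p3Hull_of_adj_of_adj_s18 {V : Type*} {G : SimpleGraph V} {T : Set V} {x y z : V}
    (hy : y ∈ p3Hull G T) (hz : z ∈ p3Hull G T) (hyz : y ≠ z)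
    (hxy : G.Adj x y) (hxz : G.Adj x z) : x ∈ p3Hull G T :=
  Set.mem_sInter.2 fun C hC =>
    hC.1.mem_of_adj_of_adj (Set.mem_sInter.1 hy C hC) (Set.mem_sInter.1 hz C hC) hyz hxy hxz

theorem ConvIndep.ncard_le_two_of_adj_of_adj {V : Type*} {G : SimpleGraph V} {S : Set V}
    (hS : ConvIndep G S) {w₁ w₂ : V} (hw : w₁ ≠ w₂)
    (hw₁ : ∀ x ∈ S, G.Adj w₁ x) (hw₂ : ∀ x ∈ S, G.Adj w₂ x) : S.ncard ≤ 2 := by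
  by_contra! h
  obtain ⟨x, hx, y, hy, z, hz, hxy, hxz, hyz⟩ :=
    (Set.two_lt_ncard (Set.finite_of_ncard_pos (by omega))).1 h
  have hy' : y ∈ p3Hull G (S \ {x}) := subset_p3Hull_s18 G _ ⟨hy, hxy.symm⟩
  have hz' : z ∈ p3Hull G (S \ {x}) := subset_p3Hull_s18 G _ ⟨hz, hxz.symm⟩
  have hw₁' := mem_p3Hull_of_adj_of_adj_s18 hy' hz' hyz (hw₁ y hy) (hw₁ z hz)
  have hw₂' := mem_p3Hull_of_adj_of_adj_s18 hy' hz' hyz (hw₂ y hy) (hw₂ z hz)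
  exact hS x hx (mem_p3Hull_of_adj_of_adj_s18 hw₁' hw₂' hw (hw₁ x hx).symm (hw₂ x hx).symm)

theorem convIndep_cograph_join_universal_general {V : Type*}
    (G : SimpleGraph V)
    (A B : Set V) (hB : B.Nonempty)
    (hjoin : ∀ a ∈ A, ∀ b ∈ B, G.Adj a b)
    (S : Set (Option V)) (hsub : S ⊆ some '' A)
    (hS : ConvIndep (addUniversal G) S) :
    S.ncard ≤ 2 := by
  obtain ⟨b, hb⟩ := hB
  refine hS.ncard_le_two_of_adj_of_adj (Option.some_ne_none b).symm (fun _ hx => ?_)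
    (fun _ hx => ?_)
  · obtain ⟨a, -, rfl⟩ := hsub hx
    exact trivial
  · obtain ⟨a, ha, rfl⟩ := hsub hx
    exact (hjoin a ha b hb).symm

theorem convIndep_cograph_join_universal {V : Type*} [Fintype V]
    (G : SimpleGraph V) (hcard : 2 ≤ Fintype.card V) (hconn : G.Connected)
    (hP4free : ∀ a b c d : V, a ≠ c → a ≠ d → b ≠ d →
      G.Adj a b → G.Adj b c → G.Adj c d →
      ¬ G.Adj a c → ¬ G.Adj a d → ¬ G.Adj b d → False)
    (A B : Set V) (hA : A.Nonempty) (hB : B.Nonempty) (hdisj : Disjoint A B)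
    (hcover : A ∪ B = Set.univ) (hjoin : ∀ a ∈ A, ∀ b ∈ B, G.Adj a b)
    (S : Set (Option V)) (hsub : S ⊆ some '' A)
    (hS : ConvIndep (addUniversal G) S) :
    S.ncard ≤ 2 :=
  convIndep_cograph_join_universal_general G A B hB hjoin S hsub hS
end
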